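/- Let σ : [0,T] × ℝⁿ → ℝ^{n×d} be Lipschitz in x uniformly in t with constant L, and let Q₁, Q₂ ∈ 𝕊ⁿ satisfy the Loewner inequality [[Q₁, 0],[0, −Q₂]] ≤ 2n[[I, −I],[−I, I]]. Then for any t ∈ [0,T] and x, y ∈ ℝⁿ, (1/2)Tr(σ(t,x)σ(t,x)ᵀ Q₁) − (1/2)Tr(σ(t,y)σ(t,y)ᵀ Q₂) ≤ n·L²·|x − y|². In particular, if x_n, y_n are sequences with n|x_n − y_n|² → 0 and Q₁ⁿ, Q₂ⁿ satisfy the above inequality (with the same n), then limsup_n [(1/2)Tr(σσᵀ(t_n,x_n) Q₁ⁿ) − (1/2)Tr(σσᵀ(t_n,y_n) Q₂ⁿ)] ≤ 0. -/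

import Mathlib

open Matrix Filter Topology

/-!
Testing the block inequality on the vector `(u, v)` gives
`u ⬝ Q₁u − v ⬝ Q₂v ≤ 2c |u − v|²`. Applied to the columns of `A = σ(t,x)` and `B = σ(t,y)`
and summed, via `Tr(A Aᵀ Q) = ∑ⱼ Aⱼ ⬝ Q Aⱼ`, this gives
`½Tr(A Aᵀ Q₁) − ½Tr(B Bᵀ Q₂) ≤ c ‖A − B‖_F² ≤ c L² |x − y|²`.
With `c = m` along the sequences, the right-hand side is `L² · m|x_m − y_m|² → 0`.
-/

theorem trace_mul_transpose_mul_eq_sum {m k R : Type*} [Fintype m] [Fintype k] [CommRing R]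
    (A : Matrix m k R) (Q : Matrix m m R) :
    (A * Aᵀ * Q).trace = ∑ j, Aᵀ j ⬝ᵥ (Q *ᵥ Aᵀ j) := by
  rw [← trace_mul_cycle Aᵀ Q A]
  refine Finset.sum_congr rfl fun j _ => ?_
  simp only [diag, mul_apply, dotProduct, mulVec, Finset.sum_mul, Finset.mul_sum, mul_assoc]
  exact Finset.sum_comm

section BlockBound

variable {m : Type*} [Fintype m] [DecidableEq m] {c : ℝ} {Q₁ Q₂ : Matrix m m ℝ}

theorem dotProduct_mulVec_sub_le_of_posSemidef_fromBlocks
    (hQ : ((2 * c) • fromBlocks (1 : Matrix m m ℝ) (-1) (-1) 1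
        - fromBlocks Q₁ 0 0 (-Q₂)).PosSemidef) (u v : m → ℝ) :
    u ⬝ᵥ (Q₁ *ᵥ u) - v ⬝ᵥ (Q₂ *ᵥ v) ≤ 2 * c * ((u - v) ⬝ᵥ (u - v)) := by
  have h := hQ.dotProduct_mulVec_nonneg (Sum.elim u v)
  simp only [star_trivial, sub_mulVec, smul_mulVec, fromBlocks_mulVec, one_mulVec,
    neg_mulVec, zero_mulVec, sumElim_dotProduct_sumElim, dotProduct_sub, dotProduct_smul,
    dotProduct_add, dotProduct_neg, add_zero, zero_add, smul_eq_mul,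
    Sum.elim_comp_inl, Sum.elim_comp_inr] at h
  simp only [sub_dotProduct, dotProduct_sub, dotProduct_comm v u] at h ⊢
  linarith

theorem half_trace_sub_le_of_posSemidef_fromBlocks {k : Type*} [Fintype k]
    (hQ : ((2 * c) • fromBlocks (1 : Matrix m m ℝ) (-1) (-1) 1
        - fromBlocks Q₁ 0 0 (-Q₂)).PosSemidef) (A B : Matrix m k ℝ) :
    (1 / 2) * (A * Aᵀ * Q₁).trace - (1 / 2) * (B * Bᵀ * Q₂).trace
      ≤ c * ∑ i, ∑ j, ((A - B) i j) ^ 2 := by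
  have hcol : ∀ j, Aᵀ j ⬝ᵥ (Q₁ *ᵥ Aᵀ j) - Bᵀ j ⬝ᵥ (Q₂ *ᵥ Bᵀ j)
      ≤ 2 * c * ∑ i, ((A - B) i j) ^ 2 := fun j => by
    convert dotProduct_mulVec_sub_le_of_posSemidef_fromBlocks hQ (Aᵀ j) (Bᵀ j) using 2
    simp only [dotProduct, sq, Pi.sub_apply, Matrix.sub_apply, transpose_apply]
  have hsum := Finset.sum_le_sum fun j (_ : j ∈ Finset.univ) => hcol j
  rw [Finset.sum_sub_distrib, ← Finset.mul_sum, Finset.sum_comm] at hsum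
  rw [trace_mul_transpose_mul_eq_sum, trace_mul_transpose_mul_eq_sum]
  linarith

end BlockBound

theorem limsup_nonpos_of_forall_pos {α : Type*} {l : Filter α} {f : α → ℝ}
    (h : ∀ ε > 0, ∀ᶠ a in l, f a ≤ ε) : limsup f l ≤ 0 := by
  rw [limsup_eq]
  by_cases hb : BddBelow {b | ∀ᶠ a in l, f a ≤ b}
  · exact le_of_forall_pos_le_add fun ε hε => by simpa using csInf_le hb (h ε hε)
  · rw [Real.sInf_of_not_bddBelow hb]

theorem stmt17_general {n d : ℕ} (T L : ℝ)
    (σ : ℝ → EuclideanSpace ℝ (Fin n) → Matrix (Fin n) (Fin d) ℝ)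
    (hσlip : ∀ t ∈ Set.Icc (0 : ℝ) T, ∀ x y : EuclideanSpace ℝ (Fin n),
      Real.sqrt (∑ i, ∑ j, ((σ t x - σ t y) i j) ^ 2) ≤ L * ‖x - y‖) :
    (∀ (Q₁ Q₂ : Matrix (Fin n) (Fin n) ℝ), Q₁.IsSymm → Q₂.IsSymm →
      ((2 * (n : ℝ)) • Matrix.fromBlocks (1 : Matrix (Fin n) (Fin n) ℝ) (-1) (-1) 1
        - Matrix.fromBlocks Q₁ 0 0 (-Q₂)).PosSemidef →
      ∀ t ∈ Set.Icc (0 : ℝ) T, ∀ x y : EuclideanSpace ℝ (Fin n),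
        (1 / 2) * ((σ t x) * (σ t x)ᵀ * Q₁).trace
            - (1 / 2) * ((σ t y) * (σ t y)ᵀ * Q₂).trace
          ≤ (n : ℝ) * L ^ 2 * ‖x - y‖ ^ 2) ∧
      ∀ (tseq : ℕ → ℝ) (xseq yseq : ℕ → EuclideanSpace ℝ (Fin n))
        (Q₁seq Q₂seq : ℕ → Matrix (Fin n) (Fin n) ℝ),
        (∀ m, tseq m ∈ Set.Icc (0 : ℝ) T) →
        (∀ m, (Q₁seq m).IsSymm) → (∀ m, (Q₂seq m).IsSymm) →
        (∀ m : ℕ, ((2 * (m : ℝ)) • Matrix.fromBlocks (1 : Matrix (Fin n) (Fin n) ℝ)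
            (-1) (-1) 1 - Matrix.fromBlocks (Q₁seq m) 0 0 (-(Q₂seq m))).PosSemidef) →
        Tendsto (fun m : ℕ => (m : ℝ) * ‖xseq m - yseq m‖ ^ 2) atTop (𝓝 0) →
        Filter.limsup (fun m : ℕ =>
            (1 / 2) * ((σ (tseq m) (xseq m)) * (σ (tseq m) (xseq m))ᵀ * Q₁seq m).trace
              - (1 / 2) * ((σ (tseq m) (yseq m)) * (σ (tseq m) (yseq m))ᵀ * Q₂seq m).trace)
          atTop ≤ 0 := by
  have bound : ∀ c : ℝ, 0 ≤ c → ∀ Q₁ Q₂ : Matrix (Fin n) (Fin n) ℝ,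
      ((2 * c) • fromBlocks (1 : Matrix (Fin n) (Fin n) ℝ) (-1) (-1) 1
        - fromBlocks Q₁ 0 0 (-Q₂)).PosSemidef →
      ∀ t ∈ Set.Icc (0 : ℝ) T, ∀ x y : EuclideanSpace ℝ (Fin n),
        (1 / 2) * ((σ t x) * (σ t x)ᵀ * Q₁).trace - (1 / 2) * ((σ t y) * (σ t y)ᵀ * Q₂).trace
          ≤ c * L ^ 2 * ‖x - y‖ ^ 2 := fun c hc Q₁ Q₂ hQ t ht x y => by
    have hfrob := (Real.sqrt_le_iff.mp (hσlip t ht x y)).2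
    have := half_trace_sub_le_of_posSemidef_fromBlocks hQ (σ t x) (σ t y)
    linarith [mul_le_mul_of_nonneg_left hfrob hc]
  refine ⟨fun Q₁ Q₂ _ _ => bound n n.cast_nonneg Q₁ Q₂,
    fun tseq xseq yseq Q₁seq Q₂seq ht _ _ hQ hxy => limsup_nonpos_of_forall_pos fun ε hε => ?_⟩
  have hlim : Tendsto (fun m : ℕ => L ^ 2 * ((m : ℝ) * ‖xseq m - yseq m‖ ^ 2)) atTop (𝓝 0) := by
    simpa using hxy.const_mul (L ^ 2)
  filter_upwards [hlim.eventually_lt_const hε] with m hm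
  have := bound m m.cast_nonneg _ _ (hQ m) _ (ht m) (xseq m) (yseq m)
  linarith

/-- Second-order term estimate in the comparison proof: if `σ` is `L`-Lipschitz in space
(Frobenius norm) and `[[Q₁,0],[0,−Q₂]] ≤ 2n[[I,−I],[−I,I]]` in the Loewner order, then
`½Tr(σσᵀ(t,x)Q₁) − ½Tr(σσᵀ(t,y)Q₂) ≤ nL²|x−y|²`; consequently along sequences with
`m‖x_m − y_m‖² → 0` the corresponding limsup is `≤ 0`. -/
theorem stmt17 {n d : ℕ} (T L : ℝ) (hT : 0 < T) (hL : 0 ≤ L)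
    (σ : ℝ → EuclideanSpace ℝ (Fin n) → Matrix (Fin n) (Fin d) ℝ)
    (hσlip : ∀ t ∈ Set.Icc (0 : ℝ) T, ∀ x y : EuclideanSpace ℝ (Fin n),
      Real.sqrt (∑ i, ∑ j, ((σ t x - σ t y) i j) ^ 2) ≤ L * ‖x - y‖) :
    (∀ (Q₁ Q₂ : Matrix (Fin n) (Fin n) ℝ), Q₁.IsSymm → Q₂.IsSymm →
      ((2 * (n : ℝ)) • Matrix.fromBlocks (1 : Matrix (Fin n) (Fin n) ℝ) (-1) (-1) 1
        - Matrix.fromBlocks Q₁ 0 0 (-Q₂)).PosSemidef →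
      ∀ t ∈ Set.Icc (0 : ℝ) T, ∀ x y : EuclideanSpace ℝ (Fin n),
        (1 / 2) * ((σ t x) * (σ t x)ᵀ * Q₁).trace
            - (1 / 2) * ((σ t y) * (σ t y)ᵀ * Q₂).trace
          ≤ (n : ℝ) * L ^ 2 * ‖x - y‖ ^ 2) ∧
      ∀ (tseq : ℕ → ℝ) (xseq yseq : ℕ → EuclideanSpace ℝ (Fin n))
        (Q₁seq Q₂seq : ℕ → Matrix (Fin n) (Fin n) ℝ),
        (∀ m, tseq m ∈ Set.Icc (0 : ℝ) T) →
        (∀ m, (Q₁seq m).IsSymm) → (∀ m, (Q₂seq m).IsSymm) →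
        (∀ m : ℕ, ((2 * (m : ℝ)) • Matrix.fromBlocks (1 : Matrix (Fin n) (Fin n) ℝ)
            (-1) (-1) 1 - Matrix.fromBlocks (Q₁seq m) 0 0 (-(Q₂seq m))).PosSemidef) →
        Tendsto (fun m : ℕ => (m : ℝ) * ‖xseq m - yseq m‖ ^ 2) atTop (𝓝 0) →
        Filter.limsup (fun m : ℕ =>
            (1 / 2) * ((σ (tseq m) (xseq m)) * (σ (tseq m) (xseq m))ᵀ * Q₁seq m).trace
              - (1 / 2) * ((σ (tseq m) (yseq m)) * (σ (tseq m) (yseq m))ᵀ * Q₂seq m).trace)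
          atTop ≤ 0 :=
  stmt17_general T L σ hσlip
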